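/- Fix 1 ≤ p < ∞ and let X = ([0,1], ρ) with ρ(x,y) = |x−y|^{1/p}, a complete separable metric space. Then: (1) for all Borel probability measures μ, ν on [0,1], d_{W_p(X)}^p(μ,ν) = d_{W_1(Y)}(μ,ν), where Y = ([0,1], |·|); (2) the flip map j, defined on Borel probability measures on [0,1] by the requirement that the cumulative distribution function of j(μ) equals the (right-continuous) quantile function of μ, is a bijective isometry of W_p(X) satisfying j(δ_t) = t·δ_0 + (1−t)·δ_1 for all t ∈ (0,1); consequently W_p(X) possesses an isometry that does not preserve the set of Dirac measures. -/

import Mathlib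

open MeasureTheory ENNReal

noncomputable section

/-- The unit interval, underlying set of both metric spaces
`X = ([0,1], |x-y|^{1/p})` and `Y = ([0,1], |x-y|)`. -/
abbrev I01 : Type := Set.Icc (0:ℝ) 1

/-- Cumulative distribution function `F_μ(x) = μ([0,x])` of a Borel probability measure on
`[0,1]`. -/
noncomputable def cdf01 (μ : Measure I01) (x : ℝ) : ℝ :=
  (μ {z : I01 | (z : ℝ) ≤ x}).toReal

/-- The (right-continuous) quantile function `F_μ^{-1}` of a Borel probability measure on
`[0,1]`: `F_μ^{-1}(y) = sup {x ∈ ℝ : F_μ(x) ≤ y}` for `y ∈ (0,1)`, extended by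
right-continuity at `0` and by `F_μ^{-1}(1) = 1`. -/
noncomputable def quantile01 (μ : Measure I01) (y : ℝ) : ℝ :=
  if y = 1 then 1
  else if y = 0 then
    sInf ((fun y' => sSup {x : ℝ | cdf01 μ x ≤ y'}) '' Set.Ioo (0:ℝ) 1)
  else sSup {x : ℝ | cdf01 μ x ≤ y}

/-- The `p`-Wasserstein distance on `X = ([0,1], ρ)` with `ρ(x,y) = |x-y|^{1/p}`:
the cost is `ρ(x,y)^p = (|x-y|^{1/p})^p` and the outer exponent is `min(1/p,1) = 1/p`.
(Here `edist z.1 z.2 = |z.1 - z.2|` is the standard distance on `[0,1]`.) -/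
noncomputable def dWX (p : ℝ) (μ ν : Measure I01) : ℝ≥0∞ :=
  (⨅ π ∈ {π : Measure (I01 × I01) | π.map Prod.fst = μ ∧ π.map Prod.snd = ν},
    ∫⁻ z, (edist z.1 z.2 ^ (1/p)) ^ p ∂π) ^ min (1/p) 1

/-- The `1`-Wasserstein distance on `Y = ([0,1], |·|)`. -/
noncomputable def dWY (μ ν : Measure I01) : ℝ≥0∞ :=
  ⨅ π ∈ {π : Measure (I01 × I01) | π.map Prod.fst = μ ∧ π.map Prod.snd = ν},
    ∫⁻ z, edist z.1 z.2 ∂π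

/-! The flip `j(μ)` is the law of `F_μ` under Lebesgue measure on `[0,1]`, so its distribution
function is the quantile function of `μ`, and reflecting the graph of `F_μ` in the diagonal shows
that `j ∘ j = id`. Since `ρ^p = |x - y|`, `d_{W_p(X)}^p = d_{W_1(Y)}`, and `d_{W_1(Y)}(μ, ν)` is the
area `∫₀¹ |F_μ - F_ν|` between the two graphs: it is a lower bound for the cost of any coupling by
the layer-cake formula, and it is attained by the coupling `(F_μ, F_ν)_* Leb` of `j μ` and `j ν`
(then apply `j ∘ j = id`). Reflection in the diagonal preserves this area, so `j` is an isometry;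
it splits `δ_t` into two atoms at `0` and `1`. -/

open Set ProbabilityTheory
open scoped symmDiff

variable {μ ν : Measure I01}

lemma measurableSet_coe_le (x : ℝ) : MeasurableSet {z : I01 | (z : ℝ) ≤ x} :=
  measurableSet_le measurable_subtype_coe measurable_const

lemma cdf01_nonneg (x : ℝ) : 0 ≤ cdf01 μ x := ENNReal.toReal_nonneg

lemma cdf01_of_neg {x : ℝ} (hx : x < 0) : cdf01 μ x = 0 := by
  have : {z : I01 | (z : ℝ) ≤ x} = ∅ := eq_empty_of_forall_notMem fun z hz ↦ by
    linarith [z.2.1, show (z : ℝ) ≤ x from hz]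
  simp [cdf01, this]

section Probability

variable [IsProbabilityMeasure μ]

lemma cdf01_eq_cdf_map : cdf01 μ = cdf (μ.map (↑)) := by
  have := Measure.isProbabilityMeasure_map (μ := μ) measurable_subtype_coe.aemeasurable
  ext x
  rw [cdf_eq_real, measureReal_def, Measure.map_apply measurable_subtype_coe measurableSet_Iic]
  rfl

lemma cdf01_le_one (x : ℝ) : cdf01 μ x ≤ 1 := by
  simpa [cdf01_eq_cdf_map] using cdf_le_one (μ.map (↑)) x

lemma monotone_cdf01 : Monotone (cdf01 μ) := by
  simpa [cdf01_eq_cdf_map] using (cdf (μ.map (↑))).mono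

lemma continuousWithinAt_cdf01 (x : ℝ) : ContinuousWithinAt (cdf01 μ) (Ici x) x := by
  simpa [cdf01_eq_cdf_map] using (cdf (μ.map (↑))).right_continuous x

lemma exists_cdf01_lt {x c : ℝ} (hx : x < 1) (hc : cdf01 μ x < c) :
    ∃ x' ∈ Ioc x 1, cdf01 μ x' < c :=
  (((continuousWithinAt_cdf01 x).mono Ioi_subset_Ici_self).eventually
    (gt_mem_nhds hc)).and (Ioc_mem_nhdsGT hx) |>.exists.imp fun _ h ↦ ⟨h.2, h.1⟩

lemma cdf01_of_one_le {x : ℝ} (hx : 1 ≤ x) : cdf01 μ x = 1 := by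
  have : {z : I01 | (z : ℝ) ≤ x} = univ := eq_univ_of_forall fun z ↦ z.2.2.trans hx
  simp [cdf01, this]

lemma sInf_cdf01_image_Ioo : sInf (cdf01 μ '' Ioo 0 1) = cdf01 μ 0 := by
  have h := (monotone_cdf01 (μ := μ)).monotoneOn (Ioo (0 : ℝ) 1)
    |>.map_csInf_of_continuousWithinAt (by
      rw [csInf_Ioo zero_lt_one]
      exact (continuousWithinAt_cdf01 0).mono (Ioo_subset_Ioi_self.trans Ioi_subset_Ici_self))
      (nonempty_Ioo.2 zero_lt_one) bddBelow_Ioo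
  rwa [csInf_Ioo zero_lt_one, eq_comm] at h

end Probability

lemma ext_of_cdf01 [IsProbabilityMeasure μ] [IsProbabilityMeasure ν]
    (h : ∀ x ∈ Icc (0 : ℝ) 1, cdf01 μ x = cdf01 ν x) : μ = ν := by
  refine Measure.ext_of_Iic μ ν fun a ↦ ?_
  have := h a a.2
  rwa [cdf01, cdf01, ENNReal.toReal_eq_toReal_iff' (measure_ne_top _ _) (measure_ne_top _ _)]
    at this

lemma volume_eq_of_Iio_subset_of_subset_Iic {a : I01} {S : Set I01} (h₁ : Iio a ⊆ S)
    (h₂ : S ⊆ Iic a) : volume S = .ofReal a :=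
  le_antisymm ((measure_mono h₂).trans_eq (unitInterval.volume_Iic a))
    ((unitInterval.volume_Iio a).symm.trans_le (measure_mono h₁))

def cdfMap (μ : Measure I01) (u : I01) : I01 := projIcc 0 1 zero_le_one (cdf01 μ u)

def flipMeasure (μ : Measure I01) : Measure I01 := volume.map (cdfMap μ)

section Flip

variable [IsProbabilityMeasure μ]

lemma coe_cdfMap (u : I01) : (cdfMap μ u : ℝ) = cdf01 μ u :=
  congrArg Subtype.val (projIcc_of_mem zero_le_one ⟨cdf01_nonneg _, cdf01_le_one _⟩)

lemma measurable_cdfMap : Measurable (cdfMap μ) :=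
  continuous_projIcc.measurable.comp (monotone_cdf01.measurable.comp measurable_subtype_coe)

instance : IsProbabilityMeasure (flipMeasure μ) :=
  Measure.isProbabilityMeasure_map measurable_cdfMap.aemeasurable

lemma cdf01_flipMeasure (x : ℝ) :
    cdf01 (flipMeasure μ) x = volume.real {u : I01 | cdf01 μ u ≤ x} := by
  rw [cdf01, flipMeasure, Measure.map_apply measurable_cdfMap (measurableSet_coe_le x)]
  simp only [preimage_ofPred_eq, coe_cdfMap, measureReal_def]

lemma cdf01_flipMeasure_eq_sSup {y : ℝ} (hy : y ∈ Ico (0 : ℝ) 1) :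
    cdf01 (flipMeasure μ) y = sSup {x : ℝ | cdf01 μ x ≤ y} := by
  set S := {x : ℝ | cdf01 μ x ≤ y}
  have hS : IsLowerSet S := fun a b hba ha ↦ (monotone_cdf01 hba).trans ha
  have hneg : ∀ x < 0, x ∈ S := fun x hx ↦ (cdf01_of_neg hx).trans_le hy.1
  have hlt : ∀ x ∈ S, x < 1 := fun x hx ↦ by
    by_contra! h
    exact (hy.2.trans_le ((cdf01_of_one_le h).symm.trans_le hx)).false
  have hne : S.Nonempty := ⟨-1, hneg _ (by norm_num)⟩
  have hbdd : BddAbove S := ⟨1, fun x hx ↦ (hlt x hx).le⟩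
  have h0 : 0 ≤ sSup S := by
    by_contra! h
    linarith [le_csSup hbdd (hneg (sSup S / 2) (by linarith))]
  set a : I01 := ⟨sSup S, h0, csSup_le hne fun x hx ↦ (hlt x hx).le⟩
  have hvol : volume {u : I01 | cdf01 μ u ≤ y} = .ofReal (sSup S) := by
    refine volume_eq_of_Iio_subset_of_subset_Iic (a := a) (fun u hu ↦ ?_)
      fun u hu ↦ le_csSup hbdd hu
    obtain ⟨x, hx, hux⟩ := exists_lt_of_lt_csSup hne hu
    exact hS hux.le hx
  rw [cdf01_flipMeasure, measureReal_def, hvol, ENNReal.toReal_ofReal h0]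

lemma cdf01_flipMeasure_eq_quantile01 {x : ℝ} (hx : x ∈ Icc (0 : ℝ) 1) :
    cdf01 (flipMeasure μ) x = quantile01 μ x := by
  rcases hx.2.eq_or_lt with rfl | hx1
  · simp [quantile01, cdf01_of_one_le]
  rcases hx.1.eq_or_lt with rfl | hx0
  · rw [quantile01, if_neg zero_ne_one, if_pos rfl,
      image_congr fun y hy ↦ (cdf01_flipMeasure_eq_sSup ⟨hy.1.le, hy.2⟩).symm,
      sInf_cdf01_image_Ioo]
  · rw [quantile01, if_neg hx1.ne, if_neg hx0.ne', cdf01_flipMeasure_eq_sSup ⟨hx.1, hx1⟩]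

/-- `{u | Q(u) ≤ x}` lies between `[0, F_μ x)` and `[0, F_μ x]` (a Galois connection between
`F_μ` and its quantile function `Q`), and the point `F_μ x` is Lebesgue-null. -/
lemma cdf01_flipMeasure_flipMeasure {x : ℝ} (hx : x ∈ Ico (0 : ℝ) 1) :
    cdf01 (flipMeasure (flipMeasure μ)) x = cdf01 μ x := by
  set a : I01 := ⟨cdf01 μ x, cdf01_nonneg x, cdf01_le_one x⟩
  have hxI : x ∈ Icc (0 : ℝ) 1 := Ico_subset_Icc_self hx
  have hvol : volume {u : I01 | cdf01 (flipMeasure μ) u ≤ x} = .ofReal (cdf01 μ x) := by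
    refine volume_eq_of_Iio_subset_of_subset_Iic (a := a) (fun u (hu : (u : ℝ) < cdf01 μ x) ↦ ?_)
      fun u hu ↦ (not_lt.1 fun h ↦ ?_ : u ≤ a)
    · have hsub : {v : I01 | cdf01 μ v ≤ u} ⊆ Iio ⟨x, hxI⟩ := fun v hv ↦
        (not_le.1 fun h : x ≤ v ↦ (hu.trans_le (monotone_cdf01 h)).not_ge hv : (v : ℝ) < x)
      rw [mem_ofPred_eq, cdf01_flipMeasure, measureReal_def]
      simpa [ENNReal.toReal_ofReal hx.1] using
        ENNReal.toReal_mono ofReal_ne_top ((measure_mono hsub).trans_eq (unitInterval.volume_Iio _))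
    · obtain ⟨x', hx', hlt⟩ := exists_cdf01_lt hx.2 (show cdf01 μ x < u from h)
      have hsub : Iic ⟨x', hx.1.trans hx'.1.le, hx'.2⟩ ⊆ {v : I01 | cdf01 μ v ≤ u} :=
        fun v hv ↦ (monotone_cdf01 (Subtype.coe_le_coe.2 hv)).trans hlt.le
      have := ENNReal.toReal_mono (measure_ne_top _ _)
        ((unitInterval.volume_Iic _).symm.trans_le (measure_mono hsub))
      rw [ENNReal.toReal_ofReal (hx.1.trans hx'.1.le), ← measureReal_def,
        ← cdf01_flipMeasure] at this
      exact (hx'.1.trans_le this).not_ge hu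
  rw [cdf01_flipMeasure, measureReal_def, hvol, ENNReal.toReal_ofReal (cdf01_nonneg x)]

lemma flipMeasure_flipMeasure : flipMeasure (flipMeasure μ) = μ :=
  ext_of_cdf01 fun x hx ↦ by
    rcases hx.2.eq_or_lt with rfl | hx1
    · rw [cdf01_of_one_le le_rfl, cdf01_of_one_le le_rfl]
    · exact cdf01_flipMeasure_flipMeasure ⟨hx.1, hx1⟩

end Flip

lemma edist_toReal_of_le {a b : ℝ≥0∞} (hb : b ≠ ⊤) (h : a ≤ b) :
    edist a.toReal b.toReal = b - a := by
  rw [edist_dist, Real.dist_eq, abs_sub_comm, abs_of_nonneg (sub_nonneg.2 (toReal_mono hb h)),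
    ← toReal_sub_of_le h hb, ofReal_toReal (sub_ne_top hb)]

section SymmDiff

variable {α : Type*} [MeasurableSpace α] (m : Measure α) [IsFiniteMeasure m]

lemma edist_measureReal_le_measure_symmDiff (s t : Set α) :
    edist (m.real s) (m.real t) ≤ m (s ∆ t) := by
  wlog h : m s ≤ m t generalizing s t
  · rw [edist_comm, symmDiff_comm]
    exact this t s (le_of_not_ge h)
  rw [measureReal_def, measureReal_def, edist_toReal_of_le (measure_ne_top _ _) h, symmDiff_comm]
  exact le_measure_symmDiff

lemma edist_measureReal_of_subset {s t : Set α} (hst : s ⊆ t) (hs : NullMeasurableSet s m) :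
    edist (m.real s) (m.real t) = m (s ∆ t) := by
  rw [measureReal_def, measureReal_def, edist_toReal_of_le (measure_ne_top _ _) (measure_mono hst),
    symmDiff_of_le hst, measure_sdiff hst hs (measure_ne_top _ _)]

end SymmDiff

lemma volume_Ici_symmDiff_Ici (a b : I01) : volume (Ici a ∆ Ici b) = edist a b := by
  wlog h : a ≤ b generalizing a b
  · rw [symmDiff_comm, edist_comm]
    exact this b a (le_of_not_ge h)
  rw [symmDiff_of_ge (Ici_subset_Ici.2 h), Ici_sdiff_Ici, unitInterval.volume_Ico, Subtype.edist_eq,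
    edist_dist, Real.dist_eq, abs_sub_comm (a : ℝ),
    abs_of_nonneg (sub_nonneg.2 (Subtype.coe_le_coe.2 h))]

def cdfDist (μ ν : Measure I01) : ℝ≥0∞ := ∫⁻ u : I01, edist (cdf01 μ u) (cdf01 ν u)

section Distances

variable [IsProbabilityMeasure μ] [IsProbabilityMeasure ν]

/-- Both sides are the area of the region between the graphs of `F_μ` and `F_ν`, sliced
vertically and horizontally. -/
lemma cdfDist_flipMeasure : cdfDist (flipMeasure μ) (flipMeasure ν) = cdfDist μ ν := by
  let E (m : Measure I01) : Set (I01 × I01) := {p | cdf01 m p.1 ≤ p.2}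
  have hE (m : Measure I01) [IsProbabilityMeasure m] : MeasurableSet (E m) :=
    measurableSet_le (monotone_cdf01.measurable.comp (measurable_subtype_coe.comp measurable_fst))
      (measurable_subtype_coe.comp measurable_snd)
  have hrow (u : I01) (m : Measure I01) [IsProbabilityMeasure m] :
      Prod.mk u ⁻¹' E m = Ici (cdfMap m u) := by
    ext x
    rw [mem_Ici, ← Subtype.coe_le_coe, coe_cdfMap]
    rfl
  have hcol (x : I01) : volume ((·, x) ⁻¹' (E μ ∆ E ν)) =
      edist (cdf01 (flipMeasure μ) x) (cdf01 (flipMeasure ν) x) := by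
    have hlower (m : Measure I01) [IsProbabilityMeasure m] :
        IsLowerSet {u : I01 | cdf01 m u ≤ x} := fun a b hba ha ↦ (monotone_cdf01 hba).trans ha
    have hmeas (m : Measure I01) [IsProbabilityMeasure m] :
        NullMeasurableSet {u : I01 | cdf01 m u ≤ x} :=
      (measurableSet_le (monotone_cdf01.measurable.comp measurable_subtype_coe)
        measurable_const).nullMeasurableSet
    rw [cdf01_flipMeasure, cdf01_flipMeasure]
    rcases (hlower μ).total (hlower ν) with h | h
    · exact (edist_measureReal_of_subset _ h (hmeas μ)).symm
    · rw [edist_comm, symmDiff_comm]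
      exact (edist_measureReal_of_subset _ h (hmeas ν)).symm
  calc cdfDist (flipMeasure μ) (flipMeasure ν)
      = (volume.prod volume) (E μ ∆ E ν) := by
        simp only [Measure.prod_apply_symm ((hE μ).symmDiff (hE ν)), hcol, cdfDist]
    _ = cdfDist μ ν := by
        simp only [Measure.prod_apply ((hE μ).symmDiff (hE ν)), preimage_symmDiff, hrow,
          volume_Ici_symmDiff_Ici, Subtype.edist_eq, coe_cdfMap, cdfDist]

end Distances

lemma cdf01_eq_measureReal_of_map_eq {π : Measure (I01 × I01)} {f : I01 × I01 → I01}
    (hf : Measurable f) (hπ : π.map f = μ) (u : I01) :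
    cdf01 μ u = π.real {z | f z ≤ u} := by
  rw [cdf01, ← hπ, Measure.map_apply hf (measurableSet_coe_le u), measureReal_def]
  rfl

/-- The layer-cake formula `|x - y| = ∫ |1{x ≤ u} - 1{y ≤ u}| du`, integrated against `π`. -/
lemma cdfDist_le_lintegral_edist [IsProbabilityMeasure μ] {π : Measure (I01 × I01)}
    (h₁ : π.map Prod.fst = μ) (h₂ : π.map Prod.snd = ν) :
    cdfDist μ ν ≤ ∫⁻ z, edist z.1 z.2 ∂π := by
  have : IsProbabilityMeasure (π.map Prod.fst) := h₁ ▸ ‹_›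
  have : IsProbabilityMeasure π := Measure.isProbabilityMeasure_of_map Prod.fst
  set A : Set ((I01 × I01) × I01) := {w | w.1.1 ≤ w.2} ∆ {w | w.1.2 ≤ w.2}
  have hA : MeasurableSet A :=
    (measurableSet_le (measurable_fst.comp measurable_fst) measurable_snd).symmDiff
      (measurableSet_le (measurable_snd.comp measurable_fst) measurable_snd)
  calc cdfDist μ ν ≤ ∫⁻ u, π ((·, u) ⁻¹' A) := lintegral_mono fun u ↦ by
        rw [cdf01_eq_measureReal_of_map_eq measurable_fst h₁,
          cdf01_eq_measureReal_of_map_eq measurable_snd h₂]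
        exact edist_measureReal_le_measure_symmDiff _ _ _
    _ = (π.prod volume) A := (Measure.prod_apply_symm hA).symm
    _ = ∫⁻ z, edist z.1 z.2 ∂π := by
        simp only [Measure.prod_apply hA]
        exact lintegral_congr fun z ↦ volume_Ici_symmDiff_Ici z.1 z.2

section Couplings

variable [IsProbabilityMeasure μ] [IsProbabilityMeasure ν]

lemma dWY_flipMeasure_le_cdfDist : dWY (flipMeasure μ) (flipMeasure ν) ≤ cdfDist μ ν := by
  have hf : Measurable fun u ↦ (cdfMap μ u, cdfMap ν u) :=
    measurable_cdfMap.prodMk measurable_cdfMap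
  refine (iInf₂_le (volume.map fun u ↦ (cdfMap μ u, cdfMap ν u)) ⟨?_, ?_⟩).trans_eq ?_
  · rw [lintegral_map (measurable_fst.edist measurable_snd) hf]
    simp only [Subtype.edist_eq, coe_cdfMap, cdfDist]
  · rw [Measure.map_map measurable_fst hf]
    rfl
  · rw [Measure.map_map measurable_snd hf]
    rfl

lemma dWY_eq_cdfDist : dWY μ ν = cdfDist μ ν := by
  refine le_antisymm ?_ (le_iInf₂ fun π hπ ↦ cdfDist_le_lintegral_edist hπ.1 hπ.2)
  simpa only [flipMeasure_flipMeasure, cdfDist_flipMeasure] using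
    dWY_flipMeasure_le_cdfDist (μ := flipMeasure μ) (ν := flipMeasure ν)

lemma dWY_flipMeasure : dWY (flipMeasure μ) (flipMeasure ν) = dWY μ ν := by
  rw [dWY_eq_cdfDist, dWY_eq_cdfDist, cdfDist_flipMeasure]

end Couplings

lemma dWX_eq_dWY_rpow {p : ℝ} (hp : 1 ≤ p) (μ ν : Measure I01) :
    dWX p μ ν = dWY μ ν ^ (1 / p) := by
  have hp₀ : p ≠ 0 := (zero_lt_one.trans_le hp).ne'
  simp only [dWX, dWY, ← ENNReal.rpow_mul, one_div_mul_cancel hp₀, ENNReal.rpow_one,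
    min_eq_left (div_le_one_of_le₀ hp (zero_le_one.trans hp))]

lemma dWX_rpow_eq_dWY {p : ℝ} (hp : 1 ≤ p) (μ ν : Measure I01) : dWX p μ ν ^ p = dWY μ ν := by
  rw [dWX_eq_dWY_rpow hp, ← ENNReal.rpow_mul, one_div_mul_cancel (zero_lt_one.trans_le hp).ne',
    ENNReal.rpow_one]

lemma cdf01_dirac (t : I01) (x : ℝ) :
    cdf01 (Measure.dirac t) x = if (t : ℝ) ≤ x then 1 else 0 := by
  rw [cdf01, Measure.dirac_apply' _ (measurableSet_coe_le x)]
  split_ifs with h <;> simp [h]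

lemma flipMeasure_dirac {t : ℝ} (ht : t ∈ Ioo (0 : ℝ) 1) :
    flipMeasure (Measure.dirac ⟨t, mem_Icc_of_Ioo ht⟩)
      = ENNReal.ofReal t • Measure.dirac (⟨0, left_mem_Icc.mpr zero_le_one⟩ : I01)
        + ENNReal.ofReal (1 - t) • Measure.dirac (⟨1, right_mem_Icc.mpr zero_le_one⟩ : I01) := by
  refine Measure.ext_of_Iic _ _ fun a ↦ ?_
  rw [flipMeasure, Measure.map_apply measurable_cdfMap measurableSet_Iic]
  rcases a.2.2.eq_or_lt with ha | ha
  · have : Iic a = univ := eq_univ_of_forall fun u ↦ Subtype.coe_le_coe.1 (u.2.2.trans ha.ge)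
    simp [this, ← ENNReal.ofReal_add ht.1.le (sub_nonneg.2 ht.2.le)]
  · have : cdfMap (Measure.dirac ⟨t, mem_Icc_of_Ioo ht⟩) ⁻¹' Iic a
        = Iio ⟨t, mem_Icc_of_Ioo ht⟩ := by
      ext u
      simp only [mem_preimage, mem_Iic, ← Subtype.coe_le_coe, coe_cdfMap, cdf01_dirac]
      by_cases h : t ≤ u
      · simp [h, ha.not_ge, ← Subtype.coe_lt_coe]
      · simp [h, a.2.1, ← Subtype.coe_lt_coe, lt_of_not_ge h]
    have h1 : (1 : I01) ∉ Iic a := ha.not_ge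
    simp [this, Measure.dirac_apply', h1]

lemma smul_dirac_add_smul_dirac_ne_dirac {α : Type*} [MeasurableSpace α]
    [MeasurableSingletonClass α] {a b : α} (hab : a ≠ b) {t : ℝ} (ht : t ∈ Ioo (0 : ℝ) 1)
    (y : α) :
    ENNReal.ofReal t • Measure.dirac a + ENNReal.ofReal (1 - t) • Measure.dirac b
      ≠ Measure.dirac y := by
  intro h
  have := congrArg (· {a}) h
  simp only [Measure.add_apply, Measure.smul_apply, Measure.dirac_apply, smul_eq_mul,
    indicator_of_mem (mem_singleton a), indicator_of_notMem (notMem_singleton_iff.2 hab.symm),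
    Pi.one_apply, mul_one, mul_zero, add_zero] at this
  rcases eq_or_ne y a with rfl | hy
  · rw [indicator_of_mem (mem_singleton y), Pi.one_apply, ENNReal.ofReal_eq_one] at this
    exact ht.2.ne this
  · rw [indicator_of_notMem (notMem_singleton_iff.2 hy), ENNReal.ofReal_eq_zero] at this
    exact this.not_gt ht.1

lemma dWX_flipMeasure {p : ℝ} (hp : 1 ≤ p) [IsProbabilityMeasure μ] [IsProbabilityMeasure ν] :
    dWX p (flipMeasure μ) (flipMeasure ν) = dWX p μ ν := by
  rw [dWX_eq_dWY_rpow hp, dWX_eq_dWY_rpow hp, dWY_flipMeasure]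

/-- (1) `d_{W_p(X)}^p = d_{W_1(Y)}` on Borel probability measures on `[0,1]`;
(2) the flip map `j`, defined by `F_{j(μ)} = F_μ^{-1}`, is a bijective isometry of `W_p(X)`
with `j(δ_t) = t δ_0 + (1-t) δ_1` for `t ∈ (0,1)`; consequently `W_p(X)` possesses an
isometry not preserving the set of Dirac measures. -/
theorem flip_is_mass_splitting_isometry (p : ℝ) (hp : 1 ≤ p) :
    (∀ μ ν : Measure I01, IsProbabilityMeasure μ → IsProbabilityMeasure ν →
        dWX p μ ν ^ p = dWY μ ν) ∧
    ∃ j : Measure I01 → Measure I01,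
      (∀ μ : Measure I01, IsProbabilityMeasure μ → IsProbabilityMeasure (j μ)) ∧
      (∀ μ : Measure I01, IsProbabilityMeasure μ →
        ∀ x ∈ Set.Icc (0:ℝ) 1, cdf01 (j μ) x = quantile01 μ x) ∧
      Set.BijOn j {μ : Measure I01 | IsProbabilityMeasure μ}
        {μ : Measure I01 | IsProbabilityMeasure μ} ∧
      (∀ μ ν : Measure I01, IsProbabilityMeasure μ → IsProbabilityMeasure ν →
        dWX p (j μ) (j ν) = dWX p μ ν) ∧
      (∀ (t : ℝ) (ht : t ∈ Set.Ioo (0:ℝ) 1),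
        j (Measure.dirac ⟨t, Set.mem_Icc_of_Ioo ht⟩)
          = ENNReal.ofReal t • Measure.dirac (⟨0, Set.left_mem_Icc.mpr zero_le_one⟩ : I01)
            + ENNReal.ofReal (1 - t) •
                Measure.dirac (⟨1, Set.right_mem_Icc.mpr zero_le_one⟩ : I01)) ∧
      ¬ (∀ x : I01, ∃ y : I01, j (Measure.dirac x) = Measure.dirac y) := by
  have hmaps : MapsTo flipMeasure {μ : Measure I01 | IsProbabilityMeasure μ}
      {μ : Measure I01 | IsProbabilityMeasure μ} := fun μ (_ : IsProbabilityMeasure μ) ↦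
    inferInstanceAs (IsProbabilityMeasure (flipMeasure μ))
  have hinv : InvOn flipMeasure flipMeasure {μ : Measure I01 | IsProbabilityMeasure μ}
      {μ : Measure I01 | IsProbabilityMeasure μ} :=
    ⟨fun _ (_ : IsProbabilityMeasure _) ↦ flipMeasure_flipMeasure,
      fun _ (_ : IsProbabilityMeasure _) ↦ flipMeasure_flipMeasure⟩
  refine ⟨fun μ ν _ _ ↦ dWX_rpow_eq_dWY hp μ ν, flipMeasure, fun μ _ ↦ inferInstance,
    fun μ _ x hx ↦ cdf01_flipMeasure_eq_quantile01 hx, hinv.bijOn hmaps hmaps,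
    fun μ ν _ _ ↦ dWX_flipMeasure hp, fun t ht ↦ flipMeasure_dirac ht, fun h ↦ ?_⟩
  have half : (1 / 2 : ℝ) ∈ Ioo (0 : ℝ) 1 := by norm_num
  obtain ⟨y, hy⟩ := h ⟨1 / 2, mem_Icc_of_Ioo half⟩
  exact smul_dirac_add_smul_dirac_ne_dirac (by simp) half y
    ((flipMeasure_dirac half).symm.trans hy)
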